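/- arXiv:2101.00507 — 3 statements merged into one kernel-verified Lean document; each statement's English description precedes it below -/
import Mathlib

section
/- For all integers n ≥ s ≥ 4, the join of the complete graph K_{s−2} with an independent set on n−s+2 vertices is a K_s-saturated graph on n vertices containing exactly (s−2)·C(n−1,2) + (n−s+2)·C(s−2,2) copies of K_{1,2}. -/
open SimpleGraph

/-- `G.Contains F` means `G` has a subgraph isomorphic to `F`,
i.e. there is an injective graph homomorphism from `F` to `G`. -/
def SimpleGraph.Contains {V : Type*} {W : Type*} (G : SimpleGraph V) (F : SimpleGraph W) : Prop :=
  ∃ f : F →g G, Function.Injective f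

/-- `G.Saturated F` : `G` is `F`-saturated, i.e. `G` contains no copy of `F`, but adding the
edge joining any pair of distinct nonadjacent vertices creates a copy of `F`. -/
def SimpleGraph.Saturated {V : Type*} {W : Type*} (G : SimpleGraph V) (F : SimpleGraph W) :
    Prop :=
  ¬ G.Contains F ∧
    ∀ u v : V, u ≠ v → ¬ G.Adj u v → (G ⊔ SimpleGraph.fromEdgeSet {s(u, v)}).Contains F

/-- The number of copies of `H` in `G`, i.e. the number of subgraphs of `G`
isomorphic to `H`. -/
noncomputable def SimpleGraph.copies {V : Type*} {W : Type*} (G : SimpleGraph V)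
    (H : SimpleGraph W) : ℕ :=
  {G' : G.Subgraph | Nonempty (G'.coe ≃g H)}.ncard

/-- The join of the complete graph on `Fin k` with an independent set on `Fin m`:
two vertices are adjacent iff they are distinct and at least one of them lies in the left
(complete) part. This is `K_k + \overline{K_m}`. -/
def joinCompleteIndep (k m : ℕ) : SimpleGraph (Fin k ⊕ Fin m) :=
  SimpleGraph.fromRel (fun x _ => x.isLeft)


/-!
A copy of `K_{1,2}` is a star: a centre `v` together with two of its neighbours, and the centre
and the pair of leaves are determined by the subgraph. Hence any finite graph has
`∑ v, C(deg v, 2)` copies of `K_{1,2}`; in `K_k + \overline{K_m}` the `k` clique vertices have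
degree `k + m - 1` and the `m` others degree `k`.

A clique of `K_k + \overline{K_m}` has at most one vertex in the independent part, hence at most
`k + 1` vertices. The non-edges are exactly the pairs inside the independent part, and adding one
of them makes it, together with the `k` clique vertices, a clique on `k + 2` vertices.
-/

open Finset

namespace SimpleGraph

variable {V : Type*} {G : SimpleGraph V}

variable (G) in
def starSubgraph (v : V) (e : Finset V) : G.Subgraph where
  verts := insert v ↑e
  Adj x y := G.Adj x y ∧ (x = v ∧ y ∈ e ∨ y = v ∧ x ∈ e)
  adj_sub h := h.1
  edge_vert := by rintro x y ⟨-, ⟨rfl, -⟩ | ⟨-, hx⟩⟩ <;> simp [*]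
  symm := ⟨fun _ _ h => ⟨h.1.symm, h.2.symm⟩⟩

theorem starSubgraph_adj_self_iff {v x : V} {e : Finset V} (he : ∀ y ∈ e, G.Adj v y) :
    (G.starSubgraph v e).Adj v x ↔ x ∈ e := by
  have hv : v ∉ e := fun h => G.irrefl (he v h)
  change G.Adj v x ∧ (v = v ∧ x ∈ e ∨ x = v ∧ v ∈ e) ↔ x ∈ e
  constructor
  · rintro ⟨-, ⟨-, hx⟩ | ⟨rfl, hx⟩⟩
    exacts [hx, absurd hx hv]
  · intro hx
    exact ⟨he x hx, Or.inl ⟨rfl, hx⟩⟩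

theorem eq_and_eq_of_starSubgraph_eq {v v' : V} {e e' : Finset V}
    (he : ∀ y ∈ e, G.Adj v y) (he' : ∀ y ∈ e', G.Adj v' y) (he_card : 1 < #e)
    (h : G.starSubgraph v e = G.starSubgraph v' e') : v = v' ∧ e = e' := by
  have hvv' : v = v' := by
    obtain ⟨a, ha, b, hb, hab⟩ := one_lt_card.1 he_card
    have hva := (starSubgraph_adj_self_iff he).2 ha
    have hvb := (starSubgraph_adj_self_iff he).2 hb
    rw [h] at hva hvb
    by_contra hne
    -- otherwise both `a` and `b` would have to be the centre `v'`
    obtain ⟨-, ⟨hv, -⟩ | ⟨rfl, -⟩⟩ := hva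
    · exact hne hv
    obtain ⟨-, ⟨hv, -⟩ | ⟨rfl, -⟩⟩ := hvb
    exacts [hne hv, hab rfl]
  subst hvv'
  refine ⟨rfl, Finset.ext fun x => ?_⟩
  rw [← starSubgraph_adj_self_iff he, ← starSubgraph_adj_self_iff he', h]

theorem map_top_eq_starSubgraph [DecidableEq V]
    (f : completeBipartiteGraph (Fin 1) (Fin 2) →g G) :
    Subgraph.map f ⊤ = G.starSubgraph (f (.inl 0)) {f (.inr 0), f (.inr 1)} := by
  ext x y
  · simp [starSubgraph, Sum.exists, Fin.exists_fin_two, Unique.exists_iff, eq_comm]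
  · simp only [Subgraph.map_adj, Relation.Map, Subgraph.top_adj, completeBipartiteGraph_adj,
      Sum.exists, Sum.isRight_inl, Bool.false_eq_true, and_false, Sum.isLeft_inl, and_true,
      false_or, Unique.exists_iff, Fin.default_eq_zero, Fin.isValue, Sum.isRight_inr,
      Sum.isLeft_inr, or_false, exists_and_left, Fin.exists_fin_two, false_and, true_and,
      exists_and_right, starSubgraph, coe_insert, coe_singleton, mem_insert, mem_singleton]
    constructor
    · rintro (⟨rfl, rfl | rfl⟩ | ⟨rfl | rfl, rfl⟩) <;> simp [f.map_adj]
    · rintro ⟨-, ⟨rfl, rfl | rfl⟩ | ⟨rfl, rfl | rfl⟩⟩ <;> simp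

def starCopy {v a b : V} (ha : G.Adj v a) (hb : G.Adj v b) (hab : a ≠ b) :
    Copy (completeBipartiteGraph (Fin 1) (Fin 2)) G where
  toHom := ⟨Sum.elim (fun _ => v) ![a, b], by
    rintro (p | p) (q | q) h
    · simp at h
    · fin_cases q
      exacts [ha, hb]
    · fin_cases p
      exacts [ha.symm, hb.symm]
    · simp at h⟩
  injective' := by
    rintro (p | p) (q | q) h <;> fin_cases p <;> fin_cases q <;>
      simp_all [ha.ne, hb.ne, ha.ne.symm, hb.ne.symm]

section Fintype

variable [Fintype V] [DecidableEq V] [DecidableRel G.Adj]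

theorem nonempty_iso_completeBipartiteGraph_one_two_iff {G' : G.Subgraph} :
    Nonempty (G'.coe ≃g completeBipartiteGraph (Fin 1) (Fin 2)) ↔
      ∃ v, ∃ e ∈ (G.neighborFinset v).powersetCard 2, G.starSubgraph v e = G' := by
  have hrange : Nonempty (G'.coe ≃g completeBipartiteGraph (Fin 1) (Fin 2)) ↔
      G' ∈ Set.range (Copy.toSubgraph (A := completeBipartiteGraph (Fin 1) (Fin 2))) := by
    rw [Copy.range_toSubgraph]
    exact ⟨fun ⟨φ⟩ => ⟨φ.symm⟩, fun ⟨φ⟩ => ⟨φ.symm⟩⟩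
  rw [hrange]
  constructor
  · rintro ⟨f, rfl⟩
    refine ⟨f (.inl 0), {f (.inr 0), f (.inr 1)}, ?_, (map_top_eq_starSubgraph f.toHom).symm⟩
    refine mem_powersetCard.2 ⟨fun x hx => ?_, card_pair (f.injective.ne (by simp))⟩
    simp only [mem_insert, mem_singleton] at hx
    rcases hx with rfl | rfl <;> simpa using f.toHom.map_adj (by simp)
  · rintro ⟨v, e, he, rfl⟩
    obtain ⟨hsub, a, b, hab, rfl⟩ := (mem_powersetCard.1 he).imp_right card_eq_two.1
    exact ⟨starCopy (by simpa using hsub (by simp)) (by simpa using hsub (by simp)) hab,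
      map_top_eq_starSubgraph _⟩

theorem copies_completeBipartiteGraph_one_two :
    G.copies (completeBipartiteGraph (Fin 1) (Fin 2)) = ∑ v, (G.degree v).choose 2 := by
  classical
  have hcopies :
      {G' : G.Subgraph | Nonempty (G'.coe ≃g completeBipartiteGraph (Fin 1) (Fin 2))} =
        ((univ.sigma fun v => (G.neighborFinset v).powersetCard 2).image
          fun p => G.starSubgraph p.1 p.2 : Set G.Subgraph) := by
    ext G'
    simp [nonempty_iso_completeBipartiteGraph_one_two_iff]
  rw [copies, hcopies, Set.ncard_coe_finset, card_image_of_injOn, card_sigma]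
  · simp [card_powersetCard]
  · rintro ⟨v, e⟩ hp ⟨v', e'⟩ hq h
    simp only [coe_sigma, Set.mem_sigma_iff, mem_coe, mem_univ, mem_powersetCard, subset_iff,
      mem_neighborFinset, true_and] at hp hq
    obtain ⟨rfl, rfl⟩ := eq_and_eq_of_starSubgraph_eq hp.1 hq.1 (by omega) h
    rfl

end Fintype

theorem contains_iff_isContained {W : Type*} {F : SimpleGraph W} : G.Contains F ↔ F ⊑ G :=
  ⟨fun ⟨f, hf⟩ => ⟨⟨f, hf⟩⟩, fun ⟨f⟩ => ⟨f.toHom, f.injective⟩⟩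

theorem saturated_completeGraph_iff {n : ℕ} :
    G.Saturated (completeGraph (Fin n)) ↔ G.CliqueFree n ∧
      ∀ u v, u ≠ v → ¬G.Adj u v → ¬(G ⊔ fromEdgeSet {s(u, v)}).CliqueFree n := by
  simp only [Saturated, contains_iff_isContained, ← not_cliqueFree_iff_top_isContained, not_not]

end SimpleGraph

section joinCompleteIndep

variable {k m : ℕ}

theorem joinCompleteIndep_adj {x y : Fin k ⊕ Fin m} :
    (joinCompleteIndep k m).Adj x y ↔ x ≠ y ∧ (x.isLeft ∨ y.isLeft) := by
  simp [joinCompleteIndep]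

instance : DecidableRel (joinCompleteIndep k m).Adj :=
  fun _ _ => decidable_of_iff _ joinCompleteIndep_adj.symm

theorem degree_joinCompleteIndep_inl (i : Fin k) :
    (joinCompleteIndep k m).degree (.inl i) = k + m - 1 := by
  have hnbr : (joinCompleteIndep k m).neighborFinset (.inl i) = univ.erase (.inl i) := by
    ext x
    simp [joinCompleteIndep_adj, ne_comm]
  rw [← card_neighborFinset_eq_degree, hnbr, card_erase_of_mem (mem_univ _), card_univ,
    Fintype.card_sum, Fintype.card_fin, Fintype.card_fin]

theorem degree_joinCompleteIndep_inr (j : Fin m) :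
    (joinCompleteIndep k m).degree (.inr j) = k := by
  have hnbr : (joinCompleteIndep k m).neighborFinset (.inr j) = univ.map .inl := by
    ext (x | x) <;> simp [joinCompleteIndep_adj]
  rw [← card_neighborFinset_eq_degree, hnbr, card_map, card_univ, Fintype.card_fin]

theorem copies_completeBipartiteGraph_one_two_joinCompleteIndep :
    (joinCompleteIndep k m).copies (completeBipartiteGraph (Fin 1) (Fin 2)) =
      k * (k + m - 1).choose 2 + m * k.choose 2 := by
  simp [copies_completeBipartiteGraph_one_two, Fintype.sum_sum_type,
    degree_joinCompleteIndep_inl, degree_joinCompleteIndep_inr]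

theorem cliqueFree_joinCompleteIndep : (joinCompleteIndep k m).CliqueFree (k + 2) := by
  intro t ht
  have hinj : Set.InjOn (Sum.elim some fun _ => none : Fin k ⊕ Fin m → Option (Fin k)) t := by
    rintro (i | a) hx (j | b) hy h
    · simpa using h
    · simp at h
    · simp at h
    · by_contra hne
      simpa [joinCompleteIndep_adj] using ht.isClique hx hy hne
  have hcard := card_le_card_of_injOn _ (fun _ _ => mem_univ _) hinj
  simp [ht.card_eq] at hcard

theorem not_cliqueFree_joinCompleteIndep_sup_edge {a b : Fin m} (hab : a ≠ b) :
    ¬(joinCompleteIndep k m ⊔ fromEdgeSet {s(.inr a, .inr b)}).CliqueFree (k + 2) := by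
  refine IsNClique.not_cliqueFree
    (s := insert (.inr a) (insert (.inr b) (univ.map .inl))) ⟨?_, ?_⟩
  · intro x hx y hy hxy
    simp only [coe_insert, coe_map, coe_univ, Set.image_univ, Set.mem_insert_iff,
      Set.mem_range] at hx hy
    rcases hx with rfl | rfl | ⟨i, rfl⟩ <;> rcases hy with rfl | rfl | ⟨j, rfl⟩ <;>
      simp_all [joinCompleteIndep_adj, Sym2.eq_swap]
  · simp [card_insert_of_notMem, hab]

theorem joinCompleteIndep_saturated :
    (joinCompleteIndep k m).Saturated (completeGraph (Fin (k + 2))) := by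
  refine saturated_completeGraph_iff.2 ⟨cliqueFree_joinCompleteIndep, ?_⟩
  rintro (i | a) (j | b) hne hadj
  case inr.inr => exact not_cliqueFree_joinCompleteIndep_sup_edge (by simpa using hne)
  all_goals simp_all [joinCompleteIndep_adj]

end joinCompleteIndep

/-- For all `n ≥ s ≥ 4`, the join of `K_{s−2}` with an independent set on
`n−s+2` vertices is a `K_s`-saturated graph on `n` vertices containing exactly
`(s−2)·C(n−1,2) + (n−s+2)·C(s−2,2)` copies of `K_{1,2}`. -/
theorem stmt_4 (n s : ℕ) (hs : 4 ≤ s) (hn : s ≤ n) :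
    Fintype.card (Fin (s - 2) ⊕ Fin (n - s + 2)) = n ∧
    (joinCompleteIndep (s - 2) (n - s + 2)).Saturated (completeGraph (Fin s)) ∧
    (joinCompleteIndep (s - 2) (n - s + 2)).copies (completeBipartiteGraph (Fin 1) (Fin 2)) =
      (s - 2) * (n - 1).choose 2 + (n - s + 2) * (s - 2).choose 2 := by
  obtain ⟨k, rfl⟩ : ∃ k, s = k + 2 := ⟨s - 2, by omega⟩
  have hdeg : k + (n - (k + 2) + 2) - 1 = n - 1 := by omega
  refine ⟨by simp; omega, joinCompleteIndep_saturated, ?_⟩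
  rw [copies_completeBipartiteGraph_one_two_joinCompleteIndep]
  simp only [Nat.add_sub_cancel, hdeg]
end

section
/- Let F be a connected bipartite graph with parts of sizes a and b. For any graph G on n vertices, the number of copies of K_{a,b} in G is at most the number of copies of F in G. -/
open SimpleGraph

/-!
Restricting a copy of `K_{a,b}` to the edges of `F` gives a copy of `F` on the same vertex set, and
this map is injective: as `F` is connected and spans `K_{a,b}`, two of its vertices lie on opposite
sides exactly when an odd walk of `F` joins them, so the copy of `K_{a,b}` is the "odd closure" of
the copy of `F`.
-/

namespace SimpleGraph

variable {V W : Type*} {G : SimpleGraph V} {G' : SimpleGraph W} {u v : V}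

def OddReachable (G : SimpleGraph V) (u v : V) : Prop :=
  ∃ p : G.Walk u v, Odd p.length

theorem OddReachable.symm (h : G.OddReachable u v) : G.OddReachable v u :=
  let ⟨p, hp⟩ := h
  ⟨p.reverse, by rwa [Walk.length_reverse]⟩

theorem OddReachable.map (f : G →g G') (h : G.OddReachable u v) :
    G'.OddReachable (f u) (f v) :=
  let ⟨p, hp⟩ := h
  ⟨p.map f, by rwa [Walk.length_map]⟩

theorem Iso.oddReachable_iff (e : G ≃g G') :
    G'.OddReachable (e u) (e v) ↔ G.OddReachable u v := by
  refine ⟨fun h => ?_, OddReachable.map e.toHom⟩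
  simpa using h.map e.symm.toHom

theorem completeBipartiteGraph_adj_iff_oddReachable {α β : Type*} {F : SimpleGraph (α ⊕ β)}
    (hle : F ≤ completeBipartiteGraph α β) (hF : F.Connected) {u v : α ⊕ β} :
    (completeBipartiteGraph α β).Adj u v ↔ F.OddReachable u v := by
  let c : F.Coloring Bool := (CompleteBipartiteGraph.bicoloring α β).comp (Hom.ofLE hle)
  have hparity (p : F.Walk u v) : Odd p.length ↔ (completeBipartiteGraph α β).Adj u v := by
    have hc (w : α ⊕ β) : c w = w.isRight := rfl
    rw [c.odd_length_iff_not_congr p, hc, hc]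
    cases u <;> cases v <;> simp
  obtain ⟨p⟩ := hF.preconnected u v
  exact ⟨fun h => ⟨p, (hparity p).2 h⟩, fun ⟨q, hq⟩ => (hparity q).1 hq⟩

namespace Subgraph

def oddClosure (H : G.Subgraph) : G.Subgraph where
  verts := H.verts
  Adj x y := G.Adj x y ∧ ∃ (hx : x ∈ H.verts) (hy : y ∈ H.verts),
    H.coe.OddReachable ⟨x, hx⟩ ⟨y, hy⟩
  adj_sub h := h.1
  edge_vert h := h.2.1
  symm := ⟨fun _ _ ⟨h, hx, hy, hr⟩ => ⟨h.symm, hy, hx, hr.symm⟩⟩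

end Subgraph

theorem Copy.oddClosure_toSubgraph_comp_ofLE {α β : Type*} {F : SimpleGraph (α ⊕ β)}
    (hle : F ≤ _root_.completeBipartiteGraph α β) (hF : F.Connected)
    (f : Copy (_root_.completeBipartiteGraph α β) G) :
    (f.comp (Copy.ofLE F _ hle)).toSubgraph.oddClosure = f.toSubgraph := by
  set g := f.comp (Copy.ofLE F _ hle)
  have hK (u v : α ⊕ β) := completeBipartiteGraph_adj_iff_oddReachable hle hF (u := u) (v := v)
  refine Subgraph.ext rfl ?_
  ext x y
  constructor
  · rintro ⟨-, hx, hy, huv⟩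
    obtain ⟨u, rfl⟩ : x ∈ Set.range g := by simpa using hx
    obtain ⟨v, rfl⟩ : y ∈ Set.range g := by simpa using hy
    exact ⟨u, v, (hK u v).2 (g.isoToSubgraph.oddReachable_iff.1 huv), rfl, rfl⟩
  · rintro ⟨u, v, huv, rfl, rfl⟩
    exact ⟨f.toHom.map_adj huv, ⟨u, trivial, rfl⟩, ⟨v, trivial, rfl⟩,
      g.isoToSubgraph.oddReachable_iff.2 ((hK u v).1 huv)⟩

theorem copies_eq_ncard_range_toSubgraph {H : SimpleGraph W} :
    G.copies H = (Set.range (Copy.toSubgraph : Copy H G → G.Subgraph)).ncard := by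
  rw [Copy.range_toSubgraph, copies]
  congr with G'
  exact ⟨fun ⟨e⟩ => ⟨e.symm⟩, fun ⟨e⟩ => ⟨e.symm⟩⟩

end SimpleGraph

theorem stmt_12_general (a b : ℕ) (F : SimpleGraph (Fin a ⊕ Fin b))
    (hbip : F ≤ completeBipartiteGraph (Fin a) (Fin b)) (hconn : F.Connected)
    (V : Type*) [Fintype V] (G : SimpleGraph V) :
    G.copies (completeBipartiteGraph (Fin a) (Fin b)) ≤ G.copies F := by
  rw [copies_eq_ncard_range_toSubgraph, copies_eq_ncard_range_toSubgraph]
  have hsub :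
      Set.range (Copy.toSubgraph : Copy (completeBipartiteGraph (Fin a) (Fin b)) G → _) ⊆
        Subgraph.oddClosure '' Set.range (Copy.toSubgraph : Copy F G → _) := by
    rintro _ ⟨f, rfl⟩
    exact ⟨_, ⟨_, rfl⟩, f.oddClosure_toSubgraph_comp_ofLE hbip hconn⟩
  exact (Set.ncard_le_ncard hsub).trans Set.ncard_image_le

/-- Let `F` be a connected bipartite graph with parts of sizes `a` and `b`.
For any graph `G` on `n` vertices, the number of copies of `K_{a,b}` in `G` is at most the
number of copies of `F` in `G`. -/
theorem stmt_12 (a b : ℕ) (F : SimpleGraph (Fin a ⊕ Fin b))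
    (hbip : F ≤ completeBipartiteGraph (Fin a) (Fin b)) (hconn : F.Connected)
    (n : ℕ) (V : Type*) [Fintype V] (hV : Fintype.card V = n) (G : SimpleGraph V) :
    G.copies (completeBipartiteGraph (Fin a) (Fin b)) ≤ G.copies F :=
  stmt_12_general a b F hbip hconn V G
end

section
/- Let s ≥ 4 be an integer and let G be a K_s-saturated graph on n vertices. Then Σ_{xy ∈ E(G)} C(|N(x) ∩ N(y)|, 2) ≥ C(s−2,2) · (C(n,2) − e(G)), where the sum is over the edges xy of G, N(x) ∩ N(y) is the set of common neighbors of x and y, and e(G) is the number of edges of G. -/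
open SimpleGraph

/-! Double count the pairs (e, p) of an edge e and a non-edge p such that both ends of e are
adjacent to both ends of p. A `K_s`-saturated graph is a maximal `K_s`-free graph, so the ends of
a non-edge have an `(s - 2)`-clique of common neighbours, and the `C(s - 2, 2)` edges of that clique
are paired with the non-edge. Conversely, every non-edge paired with an edge `xy` lies inside
`N(x) ∩ N(y)`, so there are at most `C(|N(x) ∩ N(y)|, 2)` of them. -/

open Finset

theorem Finset.card_filter_sym2_not_isDiag {α : Type*} [DecidableEq α] (A : Finset α) :
    #{p ∈ A.sym2 | ¬p.IsDiag} = (#A).choose 2 := by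
  rw [sym2_eq_image, Sym2.filter_image_mk_not_isDiag, Sym2.card_image_offDiag]

namespace SimpleGraph

variable {V : Type*} {G : SimpleGraph V}

theorem contains_completeGraph_iff_not_cliqueFree {n : ℕ} :
    G.Contains (completeGraph (Fin n)) ↔ ¬G.CliqueFree n := by
  rw [contains_iff_isContained, not_cliqueFree_iff_top_isContained]

theorem Saturated.maximal_cliqueFree {s : ℕ} (hG : G.Saturated (completeGraph (Fin s))) :
    Maximal (fun H : SimpleGraph V => H.CliqueFree s) G := by
  refine ⟨not_not.mp (contains_completeGraph_iff_not_cliqueFree.not.mp hG.1),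
    fun H hH hGH u v huv => ?_⟩
  by_contra hnadj
  have hle : G ⊔ edge u v ≤ H := sup_le hGH ((edge_le_iff H).mpr (.inr huv))
  exact contains_completeGraph_iff_not_cliqueFree.mp (hG.2 u v huv.ne hnadj) (hH.anti hle)

theorem Saturated.exists_isNClique_subset_commonNeighbors {s : ℕ}
    (hG : G.Saturated (completeGraph (Fin s))) {u v : V} (hne : u ≠ v) (hnadj : ¬G.Adj u v) :
    ∃ T : Finset V, G.IsNClique (s - 2) T ∧ (T : Set V) ⊆ G.commonNeighbors u v := by
  classical
  have hmax := hG.maximal_cliqueFree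
  obtain ⟨k, rfl⟩ : ∃ k, s = k + 1 :=
    Nat.exists_eq_succ_of_ne_zero fun hs => not_cliqueFree_zero (hs ▸ hmax.1)
  obtain ⟨T, huT, hvT, hu, hv⟩ := exists_of_maximal_cliqueFree_not_adj hmax hne hnadj
  have adj_of_mem {w : V} (hwT : w ∉ T) (hw : G.IsNClique k (insert w T)) {t : V} (ht : t ∈ T) :
      G.Adj w t :=
    hw.isClique (mem_insert_self w T) (mem_insert_of_mem ht) (ne_of_mem_of_not_mem ht hwT).symm
  refine ⟨T, ?_, fun t ht => ⟨adj_of_mem huT hu ht, adj_of_mem hvT hv ht⟩⟩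
  simpa [erase_insert huT] using hu.erase_of_mem (mem_insert_self u T)

variable [Fintype V] [DecidableEq V] [DecidableRel G.Adj]

theorem card_edgeFinset_compl :
    #Gᶜ.edgeFinset = (Fintype.card V).choose 2 - #G.edgeFinset := by
  rw [← card_edgeFinset_top_eq_card_choose_two, ← card_sdiff_of_subset (edgeFinset_mono le_top),
    ← edgeFinset_sdiff]
  congr!

theorem card_filter_compl_edgeFinset_forall_adj_le (x y : V) :
    #{p ∈ Gᶜ.edgeFinset | ∀ a ∈ s(x, y), ∀ b ∈ p, G.Adj a b} ≤
      (G.commonNeighbors x y).ncard.choose 2 := by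
  rw [Set.ncard_eq_toFinset_card', ← card_filter_sym2_not_isDiag]
  refine card_le_card fun p hp => ?_
  rw [mem_filter, mem_edgeFinset] at hp
  rw [mem_filter]
  refine ⟨mem_sym2_iff.mpr fun b hb => ?_, not_isDiag_of_mem_edgeSet _ hp.1⟩
  rw [Set.mem_toFinset, mem_commonNeighbors]
  exact ⟨hp.2 x (Sym2.mem_mk_left x y) b hb, hp.2 y (Sym2.mem_mk_right x y) b hb⟩

theorem Saturated.choose_le_card_filter_edgeFinset_forall_adj {s : ℕ}
    (hG : G.Saturated (completeGraph (Fin s))) {p : Sym2 V} (hp : p ∈ Gᶜ.edgeFinset) :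
    (s - 2).choose 2 ≤ #{e ∈ G.edgeFinset | ∀ a ∈ e, ∀ b ∈ p, G.Adj a b} := by
  induction p using Sym2.ind with | _ u v => ?_
  obtain ⟨hne, hnadj⟩ := (compl_adj G u v).mp (mem_edgeFinset.mp hp)
  obtain ⟨T, hT, hTN⟩ := hG.exists_isNClique_subset_commonNeighbors hne hnadj
  rw [← hT.card_eq, ← card_filter_sym2_not_isDiag]
  refine card_le_card fun e he => ?_
  rw [mem_filter, mem_sym2_iff] at he
  refine mem_filter.mpr ⟨?_, fun a ha b hb => ?_⟩
  · induction e using Sym2.ind with | _ a b => ?_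
    exact mem_edgeFinset.mpr <| hT.isClique (he.1 a (Sym2.mem_mk_left a b))
      (he.1 b (Sym2.mem_mk_right a b)) (Sym2.mk_isDiag_iff.not.mp he.2)
  · obtain ⟨hua, hva⟩ := hTN (he.1 a ha)
    rcases Sym2.mem_iff.mp hb with rfl | rfl
    exacts [hua.symm, hva.symm]

end SimpleGraph

/-- Let `s ≥ 4` and let `G` be a `K_s`-saturated graph on `n` vertices. Then
`Σ_{xy ∈ E(G)} C(|N(x) ∩ N(y)|, 2) ≥ C(s−2,2) · (C(n,2) − e(G))`. -/
theorem stmt_16 (s : ℕ) (n : ℕ) (V : Type*) [Fintype V] [DecidableEq V]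
    (hV : Fintype.card V = n) (G : SimpleGraph V) [DecidableRel G.Adj]
    (hG : G.Saturated (completeGraph (Fin s))) :
    (s - 2).choose 2 * (n.choose 2 - G.edgeFinset.card) ≤
      ∑ e ∈ G.edgeFinset,
        Sym2.lift ⟨fun x y => ((G.commonNeighbors x y).ncard).choose 2,
          fun x y => by simp only [SimpleGraph.commonNeighbors_symm]⟩ e := by
  let joined (e p : Sym2 V) : Prop := ∀ a ∈ e, ∀ b ∈ p, G.Adj a b
  calc (s - 2).choose 2 * (n.choose 2 - #G.edgeFinset)
      = ∑ _p ∈ Gᶜ.edgeFinset, (s - 2).choose 2 := by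
        rw [sum_const, smul_eq_mul, ← hV, ← card_edgeFinset_compl, mul_comm]
    _ ≤ ∑ p ∈ Gᶜ.edgeFinset, #(G.edgeFinset.bipartiteBelow joined p) :=
        sum_le_sum fun _ hp => hG.choose_le_card_filter_edgeFinset_forall_adj hp
    _ = ∑ e ∈ G.edgeFinset, #(Gᶜ.edgeFinset.bipartiteAbove joined e) :=
        (sum_card_bipartiteAbove_eq_sum_card_bipartiteBelow joined).symm
    _ ≤ _ := sum_le_sum fun e _ => by
        induction e using Sym2.ind with
        | _ x y => exact card_filter_compl_edgeFinset_forall_adj_le x y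
end
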